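/- arXiv:math/0702043 — 5 statements merged into one kernel-verified Lean document; each statement's English description precedes it below -/
import Mathlib

section
/- For complex numbers x, y, z on the unit circle, if the expression conj(x)²y + conj(x)y² + x·conj(z)² + x²·conj(z) + conj(y)²z + conj(y)z² + 8(conj(x)y + x·conj(z) + conj(y)z) is real, then (x-y)(x-z)(y-z)(xy + yz + zx + 8xyz + x²yz + xy²z + xyz²) = 0. -/
open Complex

theorem symmetric_real_condition (x y z : ℂ)
    (hx : ‖x‖ = 1) (hy : ‖y‖ = 1) (hz : ‖z‖ = 1)
    (hre : ((starRingEnd ℂ x) ^ 2 * y + (starRingEnd ℂ x) * y ^ 2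
        + x * (starRingEnd ℂ z) ^ 2 + x ^ 2 * (starRingEnd ℂ z)
        + (starRingEnd ℂ y) ^ 2 * z + (starRingEnd ℂ y) * z ^ 2
        + 8 * ((starRingEnd ℂ x) * y + x * (starRingEnd ℂ z) + (starRingEnd ℂ y) * z)).im = 0) :
    (x - y) * (x - z) * (y - z) *
      (x * y + y * z + z * x + 8 * x * y * z + x ^ 2 * y * z + x * y ^ 2 * z + x * y * z ^ 2) = 0 := by
  have hx0 : x ≠ 0 := by intro h; simp [h] at hx
  have hy0 : y ≠ 0 := by intro h; simp [h] at hy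
  have hz0 : z ≠ 0 := by intro h; simp [h] at hz
  have h1 : (starRingEnd ℂ) x = x⁻¹ := (Complex.inv_eq_conj hx).symm
  have h2 : (starRingEnd ℂ) y = y⁻¹ := (Complex.inv_eq_conj hy).symm
  have h3 : (starRingEnd ℂ) z = z⁻¹ := (Complex.inv_eq_conj hz).symm
  have hE := Complex.conj_eq_iff_im.mpr hre
  simp only [map_add, map_mul, map_pow, map_ofNat, Complex.conj_conj] at hE
  set a := (starRingEnd ℂ) x with ha
  set b := (starRingEnd ℂ) y with hb
  set c := (starRingEnd ℂ) z with hc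
  have e1 : a * x = 1 := by rw [h1]; exact inv_mul_cancel₀ hx0
  have e2 : b * y = 1 := by rw [h2]; exact inv_mul_cancel₀ hy0
  have e3 : c * z = 1 := by rw [h3]; exact inv_mul_cancel₀ hz0
  linear_combination (-(x^2*y^2*z^2)) * hE
    + (y^2*z^3 - y^3*z^2 + 8*x*y^2*z^3 + x*y^2*z^3*a + x*y^2*z^4 - 8*x*y^3*z^2
        - x*y^3*z^2*a - x*y^4*z^2) * e1
    + (-(x^2*z^3) - 8*x^2*y*z^3 - x^2*y*z^3*b - x^2*y*z^4 + x^3*z^2 + 8*x^3*y*z^2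
        + x^3*y*z^2*b + x^4*y*z^2) * e2
    + (x^2*y^3 + 8*x^2*y^3*z + x^2*y^3*z*c + x^2*y^4*z - x^3*y^2 - 8*x^3*y^2*z
        - x^3*y^2*z*c - x^4*y^2*z) * e3
end

section
/- For a complex number x on the unit circle, if x² + conj(x)·conj(z) + conj(x)·z is real for a unit-modulus complex number z, then (x² - 1)(z - x)(1 - xz) = 0; in particular either x = ±1, or z = x, or z = conj(x). -/
theorem real_condition_factorization (x z : ℂ)
    (hx : ‖x‖ = 1) (hz : ‖z‖ = 1)
    (hre : (x ^ 2 + starRingEnd ℂ x * starRingEnd ℂ z + starRingEnd ℂ x * z).im = 0) :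
    (x ^ 2 - 1) * (z - x) * (1 - x * z) = 0 ∧
      (x = 1 ∨ x = -1 ∨ z = x ∨ z = starRingEnd ℂ x) := by
  have hax : (starRingEnd ℂ) x * x = 1 := by
    rw [mul_comm, Complex.mul_conj, Complex.normSq_eq_norm_sq, hx]; norm_num
  have hbz : (starRingEnd ℂ) z * z = 1 := by
    rw [mul_comm, Complex.mul_conj, Complex.normSq_eq_norm_sq, hz]; norm_num
  have hconj := Complex.conj_eq_iff_im.mpr hre
  simp only [map_add, map_mul, map_pow, Complex.conj_conj] at hconj
  set a := (starRingEnd ℂ) x with ha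
  set b := (starRingEnd ℂ) z with hb
  have key : (x ^ 2 - 1) * (z - x) * (1 - x * z) = 0 := by
    linear_combination (-(x ^ 2 * z)) * hconj +
      (a * x * z + z - x * b * z - x * z ^ 2) * hax + (x ^ 3 - x) * hbz
  refine ⟨key, ?_⟩
  rcases mul_eq_zero.mp key with h | h
  · rcases mul_eq_zero.mp h with h1 | h1
    · have h2 : (x - 1) * (x + 1) = 0 := by linear_combination h1
      rcases mul_eq_zero.mp h2 with h3 | h3
      · exact Or.inl (by linear_combination h3)
      · exact Or.inr (Or.inl (by linear_combination h3))
    · exact Or.inr (Or.inr (Or.inl (by linear_combination h1)))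
  · exact Or.inr (Or.inr (Or.inr (by linear_combination (-a) * h + (-z) * hax)))
end

section
/- For complex numbers x, y, z on the unit circle, if conj(x)y + x·conj(z) + y·conj(z) is real, then (x+y)(x+z)(y-z) = 0. -/
theorem case3_factorization (x y z : ℂ)
    (hx : ‖x‖ = 1) (hy : ‖y‖ = 1) (hz : ‖z‖ = 1)
    (hre : (starRingEnd ℂ x * y + x * starRingEnd ℂ z + y * starRingEnd ℂ z).im = 0) :
    (x + y) * (x + z) * (y - z) = 0 := by
  have hx' : x * starRingEnd ℂ x = 1 := by
    rw [Complex.mul_conj]; norm_cast; simp [Complex.normSq_eq_norm_sq, hx]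
  have hy' : y * starRingEnd ℂ y = 1 := by
    rw [Complex.mul_conj]; norm_cast; simp [Complex.normSq_eq_norm_sq, hy]
  have hz' : z * starRingEnd ℂ z = 1 := by
    rw [Complex.mul_conj]; norm_cast; simp [Complex.normSq_eq_norm_sq, hz]
  have hw := Complex.conj_eq_iff_im.mpr hre
  simp only [map_add, map_mul, Complex.conj_conj] at hw
  set a := starRingEnd ℂ x
  set b := starRingEnd ℂ y
  set c := starRingEnd ℂ z
  linear_combination (-(x*y*z))*hw - (y^2*z - y*z^2)*hx' + (x^2*z + x*z^2)*hy' - (x^2*y + x*y^2)*hz'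
end

section
/- The Haagerup Λ-set Λ_H = { H(i,j)·conj(H(k,j))·H(k,l)·conj(H(i,l)) : 1 ≤ i,j,k,l ≤ n } of a complex Hadamard matrix is invariant under equivalence: if H₁ and H₂ are equivalent complex Hadamard matrices then Λ_{H₁} = Λ_{H₂}. -/
/-- Equivalence of complex Hadamard matrices. -/
def HadamardEquiv {n : ℕ} (H₁ H₂ : Matrix (Fin n) (Fin n) ℂ) : Prop :=
  ∃ (d₁ d₂ : Fin n → ℂ) (σ₁ σ₂ : Equiv.Perm (Fin n)),
    (∀ i, ‖d₁ i‖ = 1) ∧ (∀ i, ‖d₂ i‖ = 1) ∧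
    H₁ = Matrix.diagonal d₁ * σ₁.permMatrix ℂ * H₂ * σ₂.permMatrix ℂ * Matrix.diagonal d₂

/-- The Haagerup Λ-set of a matrix. -/
def LambdaSet {n : ℕ} (H : Matrix (Fin n) (Fin n) ℂ) : Set ℂ :=
  { z | ∃ i j k l : Fin n,
      z = H i j * starRingEnd ℂ (H k j) * H k l * starRingEnd ℂ (H i l) }

lemma unit_mul_conj (z : ℂ) (h : ‖z‖ = 1) : z * starRingEnd ℂ z = 1 := by
  rw [Complex.mul_conj]
  norm_cast
  rw [Complex.normSq_eq_norm_sq, h]; norm_num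

lemma key_cancel (a b c e A B C D : ℂ) (ha : a * starRingEnd ℂ a = 1)
    (hb : b * starRingEnd ℂ b = 1) (hc : c * starRingEnd ℂ c = 1)
    (he : e * starRingEnd ℂ e = 1) :
    (a * A * c) * starRingEnd ℂ (b * B * c) * (b * C * e) * starRingEnd ℂ (a * D * e)
      = A * starRingEnd ℂ B * C * starRingEnd ℂ D := by
  simp only [map_mul]
  calc a * A * c * (starRingEnd ℂ b * starRingEnd ℂ B * starRingEnd ℂ c) * (b * C * e) *
        (starRingEnd ℂ a * starRingEnd ℂ D * starRingEnd ℂ e)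
      = (A * starRingEnd ℂ B * C * starRingEnd ℂ D) *
          ((a * starRingEnd ℂ a) * (b * starRingEnd ℂ b) * (c * starRingEnd ℂ c) *
            (e * starRingEnd ℂ e)) := by ring
    _ = A * starRingEnd ℂ B * C * starRingEnd ℂ D := by rw [ha, hb, hc, he]; ring

lemma entry_formula {n : ℕ} (H₂ : Matrix (Fin n) (Fin n) ℂ) (d₁ d₂ : Fin n → ℂ)
    (σ₁ σ₂ : Equiv.Perm (Fin n)) (i j : Fin n) :
    (Matrix.diagonal d₁ * σ₁.permMatrix ℂ * H₂ * σ₂.permMatrix ℂ * Matrix.diagonal d₂) i j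
      = d₁ i * H₂ (σ₁ i) (σ₂.symm j) * d₂ j := by
  have h1 : Matrix.diagonal d₁ * σ₁.permMatrix ℂ * H₂ * σ₂.permMatrix ℂ * Matrix.diagonal d₂
      = Matrix.diagonal d₁ * ((σ₁.permMatrix ℂ * H₂) * σ₂.permMatrix ℂ) * Matrix.diagonal d₂ := by
    simp only [Matrix.mul_assoc]
  rw [h1, PEquiv.toMatrix_toPEquiv_mul, PEquiv.mul_toMatrix_toPEquiv,
    Matrix.mul_diagonal, Matrix.diagonal_mul]
  simp [mul_comm, mul_assoc, mul_left_comm]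

theorem lambda_set_invariant {n : ℕ} (H₁ H₂ : Matrix (Fin n) (Fin n) ℂ)
    (h₁mod : ∀ i j, ‖H₁ i j‖ = 1)
    (h₁Had : H₁ * H₁.conjTranspose = (n : ℂ) • 1)
    (h₂mod : ∀ i j, ‖H₂ i j‖ = 1)
    (h₂Had : H₂ * H₂.conjTranspose = (n : ℂ) • 1)
    (hequiv : HadamardEquiv H₁ H₂) :
    LambdaSet H₁ = LambdaSet H₂ := by
  obtain ⟨d₁, d₂, σ₁, σ₂, hd₁, hd₂, heq⟩ := hequiv
  have hE : ∀ i j, H₁ i j = d₁ i * H₂ (σ₁ i) (σ₂.symm j) * d₂ j := by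
    intro i j; rw [heq]; exact entry_formula H₂ d₁ d₂ σ₁ σ₂ i j
  ext z
  constructor
  · rintro ⟨i, j, k, l, rfl⟩
    refine ⟨σ₁ i, σ₂.symm j, σ₁ k, σ₂.symm l, ?_⟩
    rw [hE i j, hE k j, hE k l, hE i l]
    exact key_cancel _ _ _ _ _ _ _ _ (unit_mul_conj _ (hd₁ i)) (unit_mul_conj _ (hd₁ k))
      (unit_mul_conj _ (hd₂ j)) (unit_mul_conj _ (hd₂ l))
  · rintro ⟨i, j, k, l, rfl⟩
    refine ⟨σ₁.symm i, σ₂ j, σ₁.symm k, σ₂ l, ?_⟩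
    rw [hE (σ₁.symm i) (σ₂ j), hE (σ₁.symm k) (σ₂ j), hE (σ₁.symm k) (σ₂ l),
      hE (σ₁.symm i) (σ₂ l)]
    simp only [Equiv.apply_symm_apply, Equiv.symm_apply_apply]
    exact (key_cancel _ _ _ _ _ _ _ _ (unit_mul_conj _ (hd₁ (σ₁.symm i)))
      (unit_mul_conj _ (hd₁ (σ₁.symm k))) (unit_mul_conj _ (hd₂ (σ₂ j)))
      (unit_mul_conj _ (hd₂ (σ₂ l)))).symm
end

section
/- For every complex number x on the unit circle, 0 < |x² - 2x - 1| < 4. -/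
theorem abs_sq_sub_two_sub_one (x : ℂ) (hx : ‖x‖ = 1) :
    0 < ‖x ^ 2 - 2 * x - 1‖ ∧ ‖x ^ 2 - 2 * x - 1‖ < 4 := by
  have h1 : Complex.normSq x = 1 := by
    rw [← Complex.sq_norm, hx]; norm_num
  have hab : x.re ^ 2 + x.im ^ 2 = 1 := by
    rw [Complex.normSq_apply] at h1; nlinarith [h1]
  have key : Complex.normSq (x ^ 2 - 2 * x - 1) = 8 - 4 * x.re ^ 2 := by
    simp [Complex.normSq_apply, Complex.sub_re, Complex.sub_im, pow_two,
      Complex.mul_re, Complex.mul_im]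
    linear_combination (x.re ^ 2 + x.im ^ 2 - 4 * x.re + 7) * hab
  have ha2 : x.re ^ 2 ≤ 1 := by nlinarith [sq_nonneg x.im]
  have hsq : (‖x ^ 2 - 2 * x - 1‖) ^ 2 = 8 - 4 * x.re ^ 2 := by
    rw [Complex.sq_norm, key]
  have hnn : 0 ≤ ‖x ^ 2 - 2 * x - 1‖ := norm_nonneg _
  constructor
  · nlinarith [hsq, ha2, hnn, sq_nonneg x.re]
  · nlinarith [hsq, ha2, hnn, sq_nonneg x.re]
end
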